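/- arXiv:1311.4246 — 3 statements merged into one kernel-verified Lean document; each statement's English description precedes it below -/
import Mathlib

section
/- A dominant weight Λ satisfies both the type 1 condition and the type 2 condition if and only if Λ = ω·δ for some real number ω (i.e., the weights of the form ω·δ are the unique dominant weights satisfying both unitarity criteria). -/
noncomputable section

/-- A `gl(m+1|n+1)` weight `Λ = (Λ⁰ | Λ¹)`. -/
abbrev Weight (m n : ℕ) : Type := (Fin (m + 1) → ℝ) × (Fin (n + 1) → ℝ)

namespace Weight

/-- The graded bilinear form `(Λ,Λ') = Σ Λ⁰ᵢ Λ'⁰ᵢ − Σ Λ¹_μ Λ'¹_μ`. -/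
def form {m n : ℕ} (Λ Λ' : Weight m n) : ℝ :=
  (∑ i, Λ.1 i * Λ'.1 i) - (∑ μ, Λ.2 μ * Λ'.2 μ)

/-- The fundamental weight `ε_j`. -/
def eps (m n : ℕ) (j : Fin (m + 1)) : Weight m n :=
  (fun i => if i = j then 1 else 0, 0)

/-- The fundamental weight `δ_ν`. -/
def del (m n : ℕ) (ν : Fin (n + 1)) : Weight m n :=
  (0, fun μ => if μ = ν then 1 else 0)

/-- The Weyl vector `ρ` (graded half-sum of positive roots), for `gl(m+1|n+1)`. -/
def rho (m n : ℕ) : Weight m n :=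
  (fun j => (((m : ℝ) + 1) - ((n : ℝ) + 1) - 2 * (((j : ℕ) : ℝ) + 1) + 1) / 2,
   fun ν => (((m : ℝ) + 1) + ((n : ℝ) + 1) - 2 * (((ν : ℕ) : ℝ) + 1) + 1) / 2)

/-- The type 1 condition: (i) `(Λ+ρ, ε_m − δ_n) > 0`, or (ii) there is an odd index `μ`
with `(Λ+ρ, ε_m − δ_μ) = 0` and `Λ¹_μ = Λ¹_n`. -/
def Type1 {m n : ℕ} (Λ : Weight m n) : Prop :=
  0 < form (Λ + rho m n) (eps m n (Fin.last m) - del m n (Fin.last n)) ∨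
    ∃ μ : Fin (n + 1),
      form (Λ + rho m n) (eps m n (Fin.last m) - del m n μ) = 0 ∧
        Λ.2 μ = Λ.2 (Fin.last n)

/-- The type 2 condition: (i) `(Λ+ρ, ε_1 − δ_1) < 0`, or (ii) there is an even index `k`
with `(Λ+ρ, ε_k − δ_1) = 0` and `Λ⁰_k = Λ⁰_1`. -/
def Type2 {m n : ℕ} (Λ : Weight m n) : Prop :=
  form (Λ + rho m n) (eps m n 0 - del m n 0) < 0 ∨
    ∃ k : Fin (m + 1),
      form (Λ + rho m n) (eps m n k - del m n 0) = 0 ∧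
        Λ.1 k = Λ.1 0

/-- The weight `ε = (1,…,1 | 0,…,0)`. -/
def epsW (m n : ℕ) : Weight m n := (fun _ => 1, fun _ => 0)

/-- The weight `δ = (−1,…,−1 | 1,…,1)`. -/
def deltaW (m n : ℕ) : Weight m n := (fun _ => -1, fun _ => 1)

end Weight

/-! Write `a = Λ⁰`, `b = Λ¹`, indexed from `0`. Both conditions only involve the quantities
`(Λ+ρ, ε_j − δ_ν) = a_j + b_ν + m − j − ν`. The type 1 condition forces `a_m + b_n ≥ 0` and the
type 2 condition forces `a_0 + b_0 ≤ 0`; for a dominant weight `a_m ≤ a_0` and `b_n ≤ b_0`, so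
all four inequalities are equalities: `a` and `b` are constant with `a + b = 0`. -/

namespace Weight

variable {m n : ℕ}

lemma form_add_rho_eps_sub_del (Λ : Weight m n) (j : Fin (m + 1)) (ν : Fin (n + 1)) :
    form (Λ + rho m n) (eps m n j - del m n ν) = Λ.1 j + Λ.2 ν + ((m : ℝ) - j - ν) := by
  simp only [form, eps, del, rho, Prod.fst_add, Prod.snd_add, Prod.fst_sub, Prod.snd_sub,
    Pi.add_apply, Pi.sub_apply, Pi.zero_apply, sub_zero, zero_sub, mul_ite, mul_one, mul_zero,
    mul_neg, Finset.sum_ite_eq', Finset.mem_univ, if_true, Finset.sum_neg_distrib]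
  ring

@[simp]
lemma smul_deltaW_fst (ω : ℝ) (i : Fin (m + 1)) : (ω • deltaW m n).1 i = -ω := by
  simp [deltaW]

@[simp]
lemma smul_deltaW_snd (ω : ℝ) (ν : Fin (n + 1)) : (ω • deltaW m n).2 ν = ω := by
  simp [deltaW]

lemma Type1.fst_last_add_snd_last_nonneg {Λ : Weight m n} (h : Type1 Λ) :
    0 ≤ Λ.1 (Fin.last m) + Λ.2 (Fin.last n) := by
  rcases h with h | ⟨μ, hμ, hμn⟩
  · rw [form_add_rho_eps_sub_del, Fin.val_last, Fin.val_last] at h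
    linarith [(Nat.cast_nonneg n : (0 : ℝ) ≤ n)]
  · rw [form_add_rho_eps_sub_del, Fin.val_last, hμn] at hμ
    linarith [(Nat.cast_nonneg μ : (0 : ℝ) ≤ μ)]

lemma Type2.fst_zero_add_snd_zero_nonpos {Λ : Weight m n} (h : Type2 Λ) :
    Λ.1 0 + Λ.2 0 ≤ 0 := by
  rcases h with h | ⟨k, hk, hk0⟩
  · simp only [form_add_rho_eps_sub_del, Fin.val_zero, Nat.cast_zero] at h
    linarith [(Nat.cast_nonneg m : (0 : ℝ) ≤ m)]
  · simp only [form_add_rho_eps_sub_del, Fin.val_zero, Nat.cast_zero] at hk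
    have hkm : (k : ℝ) ≤ m := by exact_mod_cast Fin.is_le k
    linarith

lemma type1_smul_deltaW (ω : ℝ) : Type1 (ω • deltaW m n) :=
  Or.inr ⟨0, by simp [form_add_rho_eps_sub_del], by simp⟩

lemma type2_smul_deltaW (ω : ℝ) : Type2 (ω • deltaW m n) :=
  Or.inr ⟨Fin.last m, by simp [form_add_rho_eps_sub_del], by simp⟩

end Weight

lemma Fin.eq_apply_zero_of_antitone {α : Type*} [PartialOrder α] {k : ℕ} {f : Fin (k + 1) → α}
    (hf : Antitone f) (hlast : f 0 ≤ f (Fin.last k)) (i : Fin (k + 1)) : f i = f 0 :=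
  le_antisymm (hf (Fin.zero_le i)) (hlast.trans (hf (Fin.le_last i)))

open Weight

/-- A dominant weight `Λ` satisfies both the type 1 and the type 2
condition iff `Λ = ω·δ` for some `ω : ℝ`. -/
theorem statement3 (m n : ℕ) (Λ : Weight m n)
    (hdom0 : ∀ i j : Fin (m + 1), i ≤ j → Λ.1 j ≤ Λ.1 i)
    (hdom1 : ∀ μ ν : Fin (n + 1), μ ≤ ν → Λ.2 ν ≤ Λ.2 μ) :
    (Type1 Λ ∧ Type2 Λ) ↔ ∃ ω : ℝ, Λ = ω • deltaW m n := by
  constructor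
  · rintro ⟨h1, h2⟩
    have hlast := h1.fst_last_add_snd_last_nonneg
    have hzero := h2.fst_zero_add_snd_zero_nonpos
    have ha := hdom0 0 (Fin.last m) (Fin.zero_le _)
    have hb := hdom1 0 (Fin.last n) (Fin.zero_le _)
    have hconst1 := Fin.eq_apply_zero_of_antitone (f := Λ.1) hdom0 (by linarith)
    have hconst2 := Fin.eq_apply_zero_of_antitone (f := Λ.2) hdom1 (by linarith)
    refine ⟨Λ.2 0, Prod.ext (funext fun i => ?_) (funext fun ν => ?_)⟩
    · rw [smul_deltaW_fst, hconst1]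
      linarith
    · rw [smul_deltaW_snd, hconst2]
  · rintro ⟨ω, rfl⟩
    exact ⟨type1_smul_deltaW ω, type2_smul_deltaW ω⟩
end
end

section
/- Let I be a finite index type with a grading g : I → ℤ/2, let d ∈ ℤ/2, let θ be an integer, and let M, N be complex matrices indexed by I × I which are homogeneous of degree d, i.e. M_{αβ} = 0 and N_{αβ} = 0 whenever g(α) + g(β) ≠ d. Suppose M^† = (−1)^{(θ−1)·d} · N, where † denotes conjugate transpose and the sign (−1)^{(θ−1)·d} equals −1 exactly when (θ−1)·d = 1 in ℤ/2. Then (−M^{sT})^† = (−1)^{θ·d} · (−N^{sT}), where the supertranspose of a degree-d homogeneous matrix A is defined by (A^{sT})_{αβ} = (−1)^{d·g(β)} A_{βα}. (This is the computation showing that the dual of a type 1 unitary representation is type 2 unitary and vice versa.) -/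
/-!
On a matrix homogeneous of degree `d`, conjugate transposition commutes with the
supertranspose up to the sign `(−1)^d`: the entry signs `(−1)^{d·g(α)}` and `(−1)^{d·g(β)}`
differ by `(−1)^{d·(g(α) + g(β))} = (−1)^{d²} = (−1)^d`. This extra sign turns
`(−1)^{(θ−1)d}` into `(−1)^{θd}`.
-/

open Matrix

noncomputable section

/-- The sign `(−1)^x` for `x ∈ ℤ/2`: it is `−1` exactly when `x = 1`. -/
def zsign (x : ZMod 2) : ℂ := if x = 1 then -1 else 1

/-- The supertranspose of a matrix, relative to a grading `g : I → ℤ/2` and a degree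
`d ∈ ℤ/2`: `(A^{sT})_{αβ} = (−1)^{d·g(β)} A_{βα}`. -/
def superT {I : Type*} (g : I → ZMod 2) (d : ZMod 2) (A : Matrix I I ℂ) : Matrix I I ℂ :=
  Matrix.of fun α β => zsign (d * g β) * A β α

theorem ZMod.two_eq_zero_or_one (x : ZMod 2) : x = 0 ∨ x = 1 := by
  revert x; decide

theorem zsign_add (x y : ZMod 2) : zsign (x + y) = zsign x * zsign y := by
  rcases x.two_eq_zero_or_one with rfl | rfl <;> rcases y.two_eq_zero_or_one with rfl | rfl <;>
    simp +decide [zsign]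

theorem star_zsign (x : ZMod 2) : star (zsign x) = zsign x := by
  unfold zsign
  split_ifs <;> simp

theorem superT_smul {I : Type*} (g : I → ZMod 2) (d : ZMod 2) (c : ℂ) (A : Matrix I I ℂ) :
    superT g d (c • A) = c • superT g d A := by
  ext α β
  simp only [superT, of_apply, Matrix.smul_apply, smul_eq_mul]
  ring

theorem conjTranspose_superT {I : Type*} (g : I → ZMod 2) (d : ZMod 2) (A : Matrix I I ℂ)
    (hA : ∀ α β, g α + g β ≠ d → A α β = 0) :
    (superT g d A)ᴴ = zsign d • superT g d Aᴴ := by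
  ext α β
  simp only [superT, conjTranspose_apply, of_apply, Matrix.smul_apply, smul_eq_mul, star_mul',
    star_zsign]
  by_cases hαβ : g α + g β = d
  · subst hαβ
    have hsign : ∀ a b : ZMod 2, (a + b) * a = (a + b) + (a + b) * b := by decide
    rw [hsign, zsign_add]
    ring
  · simp [hA α β hαβ]

theorem statement4_general {I : Type*} (g : I → ZMod 2) (d : ZMod 2) (θ : ℤ)
    (M N : Matrix I I ℂ)
    (hM : ∀ α β, g α + g β ≠ d → M α β = 0)
    (h : Mᴴ = zsign (((θ - 1 : ℤ) : ZMod 2) * d) • N) :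
    (-(superT g d M))ᴴ = zsign (((θ : ℤ) : ZMod 2) * d) • (-(superT g d N)) := by
  have hθ : d + ((θ - 1 : ℤ) : ZMod 2) * d = ((θ : ℤ) : ZMod 2) * d := by
    push_cast
    ring
  rw [conjTranspose_neg, conjTranspose_superT g d M hM, h, superT_smul, smul_smul,
    ← zsign_add, hθ, smul_neg]

/-- if `M, N` are homogeneous of degree `d` and `M^† = (−1)^{(θ−1)d} N`,
then `(−M^{sT})^† = (−1)^{θd} (−N^{sT})`: the dual of a type 1 unitary representation
is type 2 unitary and vice versa. -/
theorem statement4 {I : Type*} [Fintype I] (g : I → ZMod 2) (d : ZMod 2) (θ : ℤ)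
    (M N : Matrix I I ℂ)
    (hM : ∀ α β, g α + g β ≠ d → M α β = 0)
    (hN : ∀ α β, g α + g β ≠ d → N α β = 0)
    (h : Mᴴ = zsign (((θ - 1 : ℤ) : ZMod 2) * d) • N) :
    (-(superT g d M))ᴴ = zsign (((θ : ℤ) : ZMod 2) * d) • (-(superT g d N)) :=
  statement4_general g d θ M N hM h
end
end

section
/- Let R be a commutative ring, m ≥ 1, x₁, …, xₘ, y ∈ R, and c : {1,…,m} → ℕ. Then (∏_{i=1}^m (1 + y·xᵢ)) · det[(xᵢ^{c_j})_{1≤i,j≤m}] = Σ_{ε ∈ {0,1}^m} y^{ε₁+…+εₘ} · det[(xᵢ^{c_j + ε_j})_{1≤i,j≤m}]. -/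
/-! Multiplying row `i` of the alternant by `1 + y xᵢ` turns column `j` into the sum of the
columns `(xᵢ^{c_j})ᵢ` and `y (xᵢ^{c_j + 1})ᵢ`; expanding the determinant multilinearly in its
columns gives one term for each choice `ε ∈ {0,1}^m`, and the powers of `y` factor out. -/

namespace Matrix

variable {n κ R : Type*} [Fintype n] [DecidableEq n] [Fintype κ] [CommRing R]

theorem det_sum_expand_rows (A : κ → Matrix n n R) :
    det (of fun i j => ∑ k, A k i j) = ∑ f : n → κ, det (of fun i j => A (f i) i j) :=
  calc det (of fun i j => ∑ k, A k i j)
      = detRowAlternating fun i => ∑ k, A k i :=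
        congrArg det (ext fun i j => (Finset.sum_apply j Finset.univ fun k => A k i).symm)
    _ = ∑ f : n → κ, det (of fun i j => A (f i) i j) :=
        (detRowAlternating (R := R) (n := n)).toMultilinearMap.map_sum fun i k => A k i

theorem det_sum_expand_cols (A : κ → Matrix n n R) :
    det (of fun i j => ∑ k, A k i j) = ∑ f : n → κ, det (of fun i j => A (f j) i j) :=
  calc det (of fun i j => ∑ k, A k i j)
      = det (of fun i j => ∑ k, (A k)ᵀ i j) := (det_transpose (of fun i j => ∑ k, A k i j)).symm
    _ = ∑ f : n → κ, det (of fun i j => (A (f i))ᵀ i j) := det_sum_expand_rows _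
    _ = ∑ f : n → κ, det (of fun i j => A (f j) i j) :=
        Finset.sum_congr rfl fun f _ => det_transpose (of fun i j => A (f j) i j)

end Matrix

theorem statement14_general (R : Type*) [CommRing R] (m : ℕ)
    (x : Fin m → R) (y : R) (c : Fin m → ℕ) :
    (∏ i, (1 + y * x i)) * (Matrix.of fun i j : Fin m => x i ^ c j).det
      = ∑ ε : Fin m → Fin 2, y ^ (∑ j, (ε j : ℕ)) *
          (Matrix.of fun i j : Fin m => x i ^ (c j + (ε j : ℕ))).det := by
  have hsplit (i j : Fin m) :
      (1 + y * x i) * x i ^ c j = ∑ e : Fin 2, y ^ (e : ℕ) * x i ^ (c j + e) := by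
    simp only [Fin.sum_univ_two, Fin.val_zero, Fin.val_one]
    ring
  rw [← Matrix.det_mul_column (fun i => 1 + y * x i)]
  simp only [Matrix.of_apply, hsplit]
  rw [Matrix.det_sum_expand_cols (fun (e : Fin 2) i j => y ^ (e : ℕ) * x i ^ (c j + e))]
  refine Finset.sum_congr rfl fun ε _ => ?_
  rw [← Finset.prod_pow_eq_pow_sum]
  exact Matrix.det_mul_row _ (Matrix.of fun i j => x i ^ (c j + (ε j : ℕ)))

/-- for a commutative ring `R`, `m ≥ 1`, `x₁,…,xₘ, y ∈ R` and an
exponent tuple `c : {1,…,m} → ℕ`,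
`(∏ᵢ (1 + y·xᵢ)) · det[(xᵢ^{c_j})] = Σ_{ε ∈ {0,1}^m} y^{Σε} · det[(xᵢ^{c_j + ε_j})]`. -/
theorem statement14 (R : Type*) [CommRing R] (m : ℕ) (hm : 1 ≤ m)
    (x : Fin m → R) (y : R) (c : Fin m → ℕ) :
    (∏ i, (1 + y * x i)) * (Matrix.of fun i j : Fin m => x i ^ c j).det
      = ∑ ε : Fin m → Fin 2, y ^ (∑ j, (ε j : ℕ)) *
          (Matrix.of fun i j : Fin m => x i ^ (c j + (ε j : ℕ))).det :=
  statement14_general R m x y c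
end
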